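/- For every real X with 0 ≤ X < 1, the double series D(X) = ∑_{n,k≥0} (a)_{2k+n}(1/2)_n(b)_n / ((3/2)_{k+n}(b+1)_{k+n} n!) · (−X/4)^k equals ∑_{n≥0} B_n · G_n(X), where G_n(X) = ∑_{k≥0} (1)_k ((a+n)/2)_k ((a+n+1)/2)_k / ((3/2+n)_k (b+1+n)_k k!) · (−X)^k is a convergent power series for each n, and the outer series over n converges. -/

import Mathlib

/-- Pochhammer symbol (rising factorial) for a real argument. -/
noncomputable def poch (x : ℝ) (n : ℕ) : ℝ := (ascPochhammer ℝ n).eval x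

/-- The coefficients `B_n = (1/2)_n (a)_n (b)_n / ((3/2)_n (b+1)_n n!)`. -/
noncomputable def coeffB (a b : ℝ) (n : ℕ) : ℝ :=
  poch (1 / 2) n * poch a n * poch b n /
    (poch (3 / 2) n * poch (b + 1) n * (Nat.factorial n : ℝ))

/-- The hypergeometric series `G_n(X) = ₃F₂(1, (a+n)/2, (a+n+1)/2; 3/2+n, b+1+n; −X)`. -/
noncomputable def seriesG (a b : ℝ) (n : ℕ) (X : ℝ) : ℝ :=
  ∑' k : ℕ, poch 1 k * poch ((a + n) / 2) k * poch ((a + n + 1) / 2) k /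
    (poch (3 / 2 + (n : ℝ)) k * poch (b + 1 + (n : ℝ)) k * (Nat.factorial k : ℝ)) * (-X) ^ k

/-!
Since `(a)_{2k+n} = (a)_n 4^k ((a+n)/2)_k ((a+n+1)/2)_k` and `(c)_{k+n} = (c)_n (c+n)_k`, the
`(n, k)` term of the double series is `B_n` times the `k`-th term of `G_n(X)`. The parameters of
`G_n` satisfy `(a+n)/2 ≤ b+1+n` and `(a+n+1)/2 ≤ 3/2+n`, so its `k`-th coefficient lies in
`[0, 1]`; and `B_n = O((a)_n / (3)_n)`, which is summable for `a < 2` by telescoping. Hence the double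
series converges absolutely, and summing it row by row gives `∑ B_n G_n(X)`.
-/

lemma poch_zero (x : ℝ) : poch x 0 = 1 := by simp [poch]

lemma poch_succ (x : ℝ) (n : ℕ) : poch x (n + 1) = poch x n * (x + n) :=
  ascPochhammer_succ_eval n x

lemma poch_succ_left (x : ℝ) (n : ℕ) : poch x (n + 1) = x * poch (x + 1) n := by
  simp [poch, ascPochhammer_succ_left, Polynomial.eval_comp]

lemma poch_mul_add (x : ℝ) (n : ℕ) : poch x n * (x + n) = x * poch (x + 1) n := by
  rw [← poch_succ, poch_succ_left]

lemma poch_pos {x : ℝ} (hx : 0 < x) (n : ℕ) : 0 < poch x n :=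
  ascPochhammer_pos n x hx

lemma poch_one (n : ℕ) : poch 1 n = n.factorial :=
  ascPochhammer_eval_one ℝ n

lemma two_mul_poch_three (n : ℕ) : 2 * poch 3 n = (n + 2).factorial := by
  have h := factorial_mul_ascPochhammer ℝ 2 n
  norm_num at h
  rw [poch, h, add_comm]

lemma poch_add (x : ℝ) (m n : ℕ) : poch x (m + n) = poch x m * poch (x + m) n := by
  induction n with
  | zero => simp [poch_zero]
  | succ n ih =>
    rw [← add_assoc, poch_succ, ih, poch_succ]
    push_cast
    ring

lemma poch_two_mul (x : ℝ) (k : ℕ) :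
    poch x (2 * k) = 4 ^ k * poch (x / 2) k * poch ((x + 1) / 2) k := by
  induction k with
  | zero => simp [poch_zero]
  | succ k ih =>
    rw [show 2 * (k + 1) = 2 * k + 1 + 1 by ring, poch_succ, poch_succ, ih, poch_succ, poch_succ]
    push_cast
    ring

lemma poch_le_poch {x y : ℝ} (hx : 0 < x) (hxy : x ≤ y) (n : ℕ) : poch x n ≤ poch y n := by
  induction n with
  | zero => simp [poch_zero]
  | succ n ih =>
    rw [poch_succ, poch_succ]
    exact mul_le_mul ih (by linarith) (by positivity) (poch_pos (hx.trans_le hxy) n).le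

lemma summable_poch_div_poch_add_one {a c : ℝ} (ha : 0 < a) (hac : a < c) :
    Summable fun n : ℕ => poch a n / poch (c + 1) n := by
  have hc : 0 < c := ha.trans hac
  have hnonneg : ∀ n : ℕ, 0 ≤ poch a n / poch (c + 1) n := fun n =>
    (div_pos (poch_pos ha n) (poch_pos (by linarith) n)).le
  set u : ℕ → ℝ := fun n => poch a n / poch c n
  have htelescope : ∀ n : ℕ, poch a n / poch (c + 1) n = c / (c - a) * (u n - u (n + 1)) := by
    intro n
    have hcn : poch c n * (c + n) = c * poch (c + 1) n := poch_mul_add c n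
    have : 0 < poch c n := poch_pos hc n
    have : 0 < poch (c + 1) n := poch_pos (by linarith) n
    have : 0 < c + n := by positivity
    have : c - a ≠ 0 := by linarith
    simp only [u, poch_succ]
    field_simp
    linear_combination poch a n * (c - a) * hcn
  refine summable_of_sum_range_le (c := c / (c - a)) hnonneg fun N => ?_
  have hu0 : u 0 = 1 := by simp [u, poch_zero]
  have huN : 0 ≤ u N := (div_pos (poch_pos ha N) (poch_pos hc N)).le
  have hcoef : 0 < c / (c - a) := div_pos hc (by linarith)
  calc ∑ n ∈ Finset.range N, poch a n / poch (c + 1) n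
      = c / (c - a) * (u 0 - u N) := by
        simp only [htelescope, ← Finset.mul_sum, Finset.sum_range_sub']
    _ ≤ c / (c - a) := by rw [hu0]; nlinarith

lemma coeffB_mul_eq {b : ℝ} (a : ℝ) (hb : -1 < b) (n : ℕ) :
    coeffB a b n * (2 * (2 * n + 1) * (b + n)) =
      b * ((n + 1) * (n + 2)) * (poch a n / poch 3 n) := by
  have hhalf : poch (1 / 2) n * (1 / 2 + n) = 1 / 2 * poch (3 / 2) n := by
    rw [poch_mul_add]; norm_num
  have hb' : poch b n * (b + n) = b * poch (b + 1) n := poch_mul_add b n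
  have hthree : 2 * poch 3 n = (n + 2) * (n + 1) * n.factorial := by
    rw [two_mul_poch_three, Nat.factorial_succ, Nat.factorial_succ]; push_cast; ring
  have : 0 < poch (3 / 2) n := poch_pos (by norm_num) n
  have : 0 < poch (b + 1) n := poch_pos (by linarith) n
  have : 0 < poch 3 n := poch_pos (by norm_num) n
  have : (0 : ℝ) < n.factorial := by positivity
  rw [coeffB]
  field_simp
  linear_combination 4 * poch b n * (b + n) * poch a n * poch 3 n * hhalf +
    2 * poch (3 / 2) n * poch a n * poch 3 n * hb' +
    poch (3 / 2) n * poch a n * b * poch (b + 1) n * hthree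

lemma abs_coeffB_le {a b : ℝ} (ha : 0 < a) (hb : -(1 / 2) < b) (n : ℕ) :
    |coeffB a b n| ≤ (1 + 3 * |b|) * (poch a n / poch 3 n) := by
  rcases Nat.eq_zero_or_pos n with rfl | hn
  · simp [coeffB, poch_zero, abs_nonneg]
  have hn : (1 : ℝ) ≤ n := by exact_mod_cast hn
  set r := poch a n / poch 3 n
  have hr : 0 < r := div_pos (poch_pos ha n) (poch_pos (by norm_num) n)
  have hD : 0 < 2 * (2 * n + 1) * (b + n) := by nlinarith
  have hid : |coeffB a b n| * (2 * (2 * n + 1) * (b + n)) = |b| * ((n + 1) * (n + 2)) * r := by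
    have h := congrArg abs (coeffB_mul_eq a (show -1 < b by linarith) n)
    rwa [abs_mul, abs_of_pos hD, abs_mul, abs_mul, abs_of_pos hr,
      abs_of_pos (show (0 : ℝ) < (n + 1) * (n + 2) by positivity)] at h
  -- `2 (b + n) ≥ n` and `(n + 1) (n + 2) ≤ 3 n (2 n + 1)` for `n ≥ 1`
  have hpoly : |b| * ((n + 1) * (n + 2)) ≤ (1 + 3 * |b|) * (2 * (2 * n + 1) * (b + n)) := by
    nlinarith [abs_nonneg b, mul_nonneg (abs_nonneg b) (sub_nonneg.2 hn)]
  refine le_of_mul_le_mul_right ?_ hD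
  rw [hid]
  linarith [mul_le_mul_of_nonneg_right hpoly hr.le]

noncomputable def coeffG (a b : ℝ) (n k : ℕ) : ℝ :=
  poch 1 k * poch ((a + n) / 2) k * poch ((a + n + 1) / 2) k /
    (poch (3 / 2 + (n : ℝ)) k * poch (b + 1 + (n : ℝ)) k * (Nat.factorial k : ℝ))

lemma coeffG_nonneg_and_le_one {a b : ℝ} (ha : 0 < a) (ha2 : a ≤ 2) (hab : a / 2 ≤ b + 1)
    (n k : ℕ) : 0 ≤ coeffG a b n k ∧ coeffG a b n k ≤ 1 := by
  have hn : (0 : ℝ) ≤ n := n.cast_nonneg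
  have hP₁ : 0 < poch ((a + n) / 2) k := poch_pos (by positivity) k
  have hP₂ : 0 < poch ((a + n + 1) / 2) k := poch_pos (by positivity) k
  have hQ₁ : poch ((a + n) / 2) k ≤ poch (b + 1 + n) k :=
    poch_le_poch (by positivity) (by linarith) k
  have hQ₂ : poch ((a + n + 1) / 2) k ≤ poch (3 / 2 + n) k :=
    poch_le_poch (by positivity) (by linarith) k
  have hk : (0 : ℝ) < k.factorial := by positivity
  have hD : 0 < poch (3 / 2 + (n : ℝ)) k * poch (b + 1 + (n : ℝ)) k * k.factorial := by
    have := hP₁.trans_le hQ₁; have := hP₂.trans_le hQ₂; positivity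
  rw [coeffG, poch_one]
  refine ⟨by positivity, (div_le_one hD).2 ?_⟩
  nlinarith [mul_le_mul hQ₁ hQ₂ hP₂.le (hP₁.trans_le hQ₁).le]

lemma abs_coeffG_mul_pow_le {a b : ℝ} (ha : 0 < a) (ha2 : a ≤ 2) (hab : a / 2 ≤ b + 1)
    (X : ℝ) (n k : ℕ) : |coeffG a b n k * (-X) ^ k| ≤ |X| ^ k := by
  obtain ⟨h₀, h₁⟩ := coeffG_nonneg_and_le_one ha ha2 hab n k
  rw [abs_mul, abs_of_nonneg h₀, abs_pow, abs_neg]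
  exact mul_le_of_le_one_left (by positivity) h₁

lemma summable_coeffG_mul_pow {a b X : ℝ} (ha : 0 < a) (ha2 : a ≤ 2) (hab : a / 2 ≤ b + 1)
    (hX : |X| < 1) (n : ℕ) :
    Summable fun k => coeffG a b n k * (-X) ^ k :=
  .of_norm_bounded (summable_geometric_of_lt_one (abs_nonneg X) hX)
    (abs_coeffG_mul_pow_le ha ha2 hab X n)

lemma double_series_term_eq {b : ℝ} (a X : ℝ) (hb : -1 < b) (n k : ℕ) :
    poch a (2 * k + n) * poch (1 / 2) n * poch b n /
        (poch (3 / 2) (k + n) * poch (b + 1) (k + n) * (Nat.factorial n : ℝ)) * (-X / 4) ^ k =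
      coeffB a b n * (coeffG a b n k * (-X) ^ k) := by
  have hn : (0 : ℝ) ≤ n := n.cast_nonneg
  have : poch (3 / 2) n ≠ 0 := (poch_pos (by norm_num) n).ne'
  have : poch (b + 1) n ≠ 0 := (poch_pos (by linarith) n).ne'
  have : poch (3 / 2 + (n : ℝ)) k ≠ 0 := (poch_pos (by positivity) k).ne'
  have : poch (b + 1 + (n : ℝ)) k ≠ 0 := (poch_pos (by linarith) k).ne'
  rw [add_comm k n, add_comm (2 * k) n, poch_add, poch_add, poch_add, poch_two_mul, coeffB, coeffG,
    poch_one, div_pow]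
  field_simp

lemma summable_coeffB_mul_coeffG_mul_pow {a b X : ℝ} (ha : 0 < a) (ha2 : a < 2)
    (hb : -(1 / 2) < b) (hab : a / 2 ≤ b + 1) (hX : |X| < 1) :
    Summable fun nk : ℕ × ℕ => coeffB a b nk.1 * (coeffG a b nk.1 nk.2 * (-X) ^ nk.2) := by
  have hpoch : Summable fun n : ℕ => poch a n / poch 3 n := by
    simpa only [show (2 : ℝ) + 1 = 3 by norm_num] using summable_poch_div_poch_add_one ha ha2
  have hpoch_nonneg (n : ℕ) : 0 ≤ (1 + 3 * |b|) * (poch a n / poch 3 n) := by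
    have := poch_pos ha n; have := poch_pos (show (0 : ℝ) < 3 by norm_num) n; positivity
  have hmajorant := (hpoch.mul_left (1 + 3 * |b|)).mul_of_nonneg
    (summable_geometric_of_lt_one (abs_nonneg X) hX) hpoch_nonneg (fun k => by positivity)
  refine hmajorant.of_norm_bounded fun ⟨n, k⟩ => ?_
  rw [Real.norm_eq_abs, abs_mul]
  exact mul_le_mul (abs_coeffB_le ha hb n) (abs_coeffG_mul_pow_le ha ha2.le hab X n k)
    (abs_nonneg _) (hpoch_nonneg n)

theorem stmt_1_general (a b X : ℝ) (ha0 : 0 < a) (ha2 : a < 2)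
    (hb1 : (a - 1) / 2 < b)
    (hX0 : 0 ≤ X) (hX1 : X < 1) :
    (∀ n : ℕ, Summable (fun k : ℕ =>
        poch 1 k * poch ((a + n) / 2) k * poch ((a + n + 1) / 2) k /
          (poch (3 / 2 + (n : ℝ)) k * poch (b + 1 + (n : ℝ)) k * (Nat.factorial k : ℝ)) *
          (-X) ^ k)) ∧
    Summable (fun n : ℕ => coeffB a b n * seriesG a b n X) ∧
    (∑' nk : ℕ × ℕ,
        poch a (2 * nk.2 + nk.1) * poch (1 / 2) nk.1 * poch b nk.1 /
          (poch (3 / 2) (nk.2 + nk.1) * poch (b + 1) (nk.2 + nk.1) *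
            (Nat.factorial nk.1 : ℝ)) * (-X / 4) ^ nk.2) =
      ∑' n : ℕ, coeffB a b n * seriesG a b n X := by
  have hab : a / 2 ≤ b + 1 := by linarith
  have hX : |X| < 1 := by rwa [abs_of_nonneg hX0]
  have hF := summable_coeffB_mul_coeffG_mul_pow ha0 ha2 (by linarith) hab hX
  have hrow (n : ℕ) : ∑' k, coeffB a b n * (coeffG a b n k * (-X) ^ k) =
      coeffB a b n * seriesG a b n X := tsum_mul_left
  refine ⟨summable_coeffG_mul_pow ha0 ha2.le hab hX, by simpa only [hrow] using hF.prod, ?_⟩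
  simp only [double_series_term_eq a X (show -1 < b by linarith)]
  rw [hF.tsum_prod]
  exact tsum_congr hrow

theorem stmt_1 (a b X : ℝ) (ha0 : 0 < a) (ha2 : a < 2)
    (hb1 : (a - 1) / 2 < b) (hb2 : b ≤ 3 / 2)
    (hX0 : 0 ≤ X) (hX1 : X < 1) :
    (∀ n : ℕ, Summable (fun k : ℕ =>
        poch 1 k * poch ((a + n) / 2) k * poch ((a + n + 1) / 2) k /
          (poch (3 / 2 + (n : ℝ)) k * poch (b + 1 + (n : ℝ)) k * (Nat.factorial k : ℝ)) *
          (-X) ^ k)) ∧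
    Summable (fun n : ℕ => coeffB a b n * seriesG a b n X) ∧
    (∑' nk : ℕ × ℕ,
        poch a (2 * nk.2 + nk.1) * poch (1 / 2) nk.1 * poch b nk.1 /
          (poch (3 / 2) (nk.2 + nk.1) * poch (b + 1) (nk.2 + nk.1) *
            (Nat.factorial nk.1 : ℝ)) * (-X / 4) ^ nk.2) =
      ∑' n : ℕ, coeffB a b n * seriesG a b n X :=
  stmt_1_general a b X ha0 ha2 hb1 hX0 hX1
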